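/- arXiv:math/9809012 — 2 statements merged into one kernel-verified Lean document; each statement's English description precedes it below -/
import Mathlib

section
/- (Theorem 1.2, boundedness) There exists an absolute constant c > 0 such that for every p ∈ [1, ∞] and every f ∈ L_p(ℝ), the function Gf belongs to L_p(ℝ) and ‖Gf‖_{L_p(ℝ)} ≤ c·‖f‖_{L_p(ℝ)}. -/
open MeasureTheory Filter Real Set
open scoped ENNReal

noncomputable section

/-- Condition (1.5): for every `a > 0`, `∫_{x-a}^{x+a} q(t) dt → ∞` as `|x| → ∞`. -/
def Cond15 (q : ℝ → ℝ) : Prop :=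
  ∀ a : ℝ, 0 < a → Tendsto (fun x => ∫ t in (x - a)..(x + a), q t) (cocompact ℝ) atTop

/-- `(u, v)` is a principal fundamental system of solutions (PFSS) of `z'' = q z`.
Local absolute continuity of `u'` together with `u'' = q u` a.e. is encoded via the
fundamental theorem of calculus: `u' b - u' a = ∫_a^b q t * u t dt` for all `a, b`. -/
def IsPFSS (q u v : ℝ → ℝ) : Prop :=
  ContDiff ℝ 1 u ∧ ContDiff ℝ 1 v ∧
  (∀ a b : ℝ, deriv u b - deriv u a = ∫ t in a..b, q t * u t) ∧
  (∀ a b : ℝ, deriv v b - deriv v a = ∫ t in a..b, q t * v t) ∧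
  (∀ x, 0 < u x) ∧ (∀ x, 0 < v x) ∧
  (∀ x, deriv u x < 0) ∧ (∀ x, 0 < deriv v x) ∧
  (∀ x, deriv v x * u x - deriv u x * v x = 1) ∧
  (∀ x, u x = v x * ∫ t in Set.Ioi x, ((v t) ^ 2)⁻¹) ∧
  Tendsto u atTop (nhds 0) ∧ Tendsto (deriv u) atTop (nhds 0) ∧
  Tendsto v atTop atTop ∧ Tendsto (deriv v) atTop atTop ∧
  Tendsto v atBot (nhds 0) ∧ Tendsto (deriv v) atBot (nhds 0) ∧
  Tendsto u atBot atTop ∧ Tendsto (fun x => |deriv u x|) atBot atTop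

/-- The Green function: `G(x,t) = u(x) v(t)` for `x ≥ t`, `G(x,t) = u(t) v(x)` for `x ≤ t`. -/
def GreenFn (u v : ℝ → ℝ) (x t : ℝ) : ℝ := if x ≤ t then u t * v x else u x * v t

/-- The Green operator `(Gf)(x) = ∫_ℝ G(x,t) f(t) dt`. -/
def GreenOp (u v f : ℝ → ℝ) (x : ℝ) : ℝ := ∫ t, GreenFn u v x t * f t

/-! Since `q ≥ 1`, integrating `u ≤ q u = u''` over `[x, ∞)` gives `∫_x^∞ u ≤ -u'(x)`, and
likewise `∫_{-∞}^x v ≤ v'(x)`. Hence every row integral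
`∫ G(x,t) dt = u(x) ∫_{-∞}^x v + v(x) ∫_x^∞ u` is at most `u v' - u' v = 1` (the Wronskian), and
by the symmetry of `G` so is every column integral. Schur's test then bounds `G` on every `L_p`,
`1 ≤ p ≤ ∞`, with constant `1`. -/

section SchurTest

variable {α β : Type*} [MeasurableSpace α] [MeasurableSpace β] {μ : Measure α} {ν : Measure β}

-- Hölder with exponents `1 - 1/r` and `1/r`, applied to `K` and `K * g ^ r`.
theorem ENNReal.rpow_lintegral_mul_le_lintegral_mul_rpow {K g : β → ℝ≥0∞}
    (hK : AEMeasurable K ν) (hg : AEMeasurable g ν) (hK1 : ∫⁻ t, K t ∂ν ≤ 1) {r : ℝ}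
    (hr : 1 ≤ r) : (∫⁻ t, K t * g t ∂ν) ^ r ≤ ∫⁻ t, K t * g t ^ r ∂ν := by
  have hr0 : 0 < r := zero_lt_one.trans_le hr
  have hsplit : ∀ t, K t ^ (1 - r⁻¹) * (K t * g t ^ r) ^ r⁻¹ = K t * g t := by
    intro t
    rw [ENNReal.mul_rpow_of_nonneg _ _ (by positivity), ← ENNReal.rpow_mul,
      mul_inv_cancel₀ hr0.ne', ENNReal.rpow_one, ← mul_assoc,
      ← ENNReal.rpow_add_of_nonneg _ _ (sub_nonneg.2 (inv_le_one_of_one_le₀ hr)) (by positivity),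
      sub_add_cancel, ENNReal.rpow_one]
  have holder := ENNReal.lintegral_mul_norm_pow_le (g := fun t => K t * g t ^ r) hK
    (hK.mul (hg.pow_const r)) (sub_nonneg.2 (inv_le_one_of_one_le₀ hr)) (inv_nonneg.2 hr0.le)
    (sub_add_cancel 1 r⁻¹)
  simp only [hsplit] at holder
  calc (∫⁻ t, K t * g t ∂ν) ^ r
      ≤ ((∫⁻ t, K t ∂ν) ^ (1 - r⁻¹) * (∫⁻ t, K t * g t ^ r ∂ν) ^ r⁻¹) ^ r := by gcongr
    _ ≤ (1 * (∫⁻ t, K t * g t ^ r ∂ν) ^ r⁻¹) ^ r := by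
        gcongr
        exact ENNReal.rpow_le_one hK1 (sub_nonneg.2 (inv_le_one_of_one_le₀ hr))
    _ = ∫⁻ t, K t * g t ^ r ∂ν := by
        rw [one_mul, ← ENNReal.rpow_mul, inv_mul_cancel₀ hr0.ne', ENNReal.rpow_one]

theorem lintegral_rpow_lintegral_mul_le [SFinite μ] [SFinite ν] {K : α → β → ℝ≥0∞}
    (hK : Measurable (Function.uncurry K)) {g : β → ℝ≥0∞} (hg : AEMeasurable g ν)
    (hrow : ∀ x, ∫⁻ t, K x t ∂ν ≤ 1) (hcol : ∀ t, ∫⁻ x, K x t ∂μ ≤ 1) {r : ℝ} (hr : 1 ≤ r) :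
    ∫⁻ x, (∫⁻ t, K x t * g t ∂ν) ^ r ∂μ ≤ ∫⁻ t, g t ^ r ∂ν :=
  calc ∫⁻ x, (∫⁻ t, K x t * g t ∂ν) ^ r ∂μ
      ≤ ∫⁻ x, ∫⁻ t, K x t * g t ^ r ∂ν ∂μ := lintegral_mono fun x =>
        ENNReal.rpow_lintegral_mul_le_lintegral_mul_rpow
          (hK.comp measurable_prodMk_left).aemeasurable hg (hrow x) hr
    _ = ∫⁻ t, ∫⁻ x, K x t * g t ^ r ∂μ ∂ν :=
        lintegral_lintegral_swap (hK.aemeasurable.mul (hg.pow_const r).comp_snd)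
    _ = ∫⁻ t, (∫⁻ x, K x t ∂μ) * g t ^ r ∂ν := lintegral_congr fun _ =>
        lintegral_mul_const _ (hK.comp measurable_prodMk_right)
    _ ≤ ∫⁻ t, g t ^ r ∂ν := lintegral_mono fun t =>
        (mul_le_mul_left (hcol t) _).trans_eq (one_mul _)

theorem enorm_integral_mul_le_lintegral_enorm_mul (a f : β → ℝ) :
    ‖∫ t, a t * f t ∂ν‖ₑ ≤ ∫⁻ t, ‖a t‖ₑ * ‖f t‖ₑ ∂ν :=
  (enorm_integral_le_lintegral_enorm _).trans_eq (lintegral_congr fun _ => enorm_mul _ _)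

theorem eLpNorm_top_integral_mul_le {k : α → β → ℝ} (hk : Measurable (Function.uncurry k))
    (hrow : ∀ x, ∫⁻ t, ‖k x t‖ₑ ∂ν ≤ 1) (f : β → ℝ) :
    eLpNorm (fun x => ∫ t, k x t * f t ∂ν) ∞ μ ≤ eLpNorm f ∞ ν := by
  rw [eLpNorm_exponent_top, eLpNorm_exponent_top]
  refine essSup_le_of_ae_le _ (ae_of_all _ fun x => ?_)
  calc ‖∫ t, k x t * f t ∂ν‖ₑ
      ≤ ∫⁻ t, ‖k x t‖ₑ * ‖f t‖ₑ ∂ν := enorm_integral_mul_le_lintegral_enorm_mul _ f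
    _ ≤ ∫⁻ t, ‖k x t‖ₑ * eLpNormEssSup f ν ∂ν :=
        lintegral_mono_ae (by filter_upwards [ae_le_eLpNormEssSup (f := f)] with t ht; gcongr)
    _ = (∫⁻ t, ‖k x t‖ₑ ∂ν) * eLpNormEssSup f ν :=
        lintegral_mul_const _ (hk.comp measurable_prodMk_left).enorm
    _ ≤ eLpNormEssSup f ν := (mul_le_mul_left (hrow x) _).trans_eq (one_mul _)

theorem eLpNorm_integral_mul_le [SFinite μ] [SFinite ν] {k : α → β → ℝ}
    (hk : Measurable (Function.uncurry k)) (hrow : ∀ x, ∫⁻ t, ‖k x t‖ₑ ∂ν ≤ 1)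
    (hcol : ∀ t, ∫⁻ x, ‖k x t‖ₑ ∂μ ≤ 1) {p : ℝ≥0∞} (hp : 1 ≤ p) {f : β → ℝ}
    (hf : AEStronglyMeasurable f ν) :
    eLpNorm (fun x => ∫ t, k x t * f t ∂ν) p μ ≤ eLpNorm f p ν := by
  rcases eq_or_ne p ∞ with rfl | hp_top
  · exact eLpNorm_top_integral_mul_le hk hrow f
  have hp0 : p ≠ 0 := (zero_lt_one.trans_le hp).ne'
  have hr : 1 ≤ p.toReal := by simpa using ENNReal.toReal_mono hp_top hp
  rw [eLpNorm_eq_lintegral_rpow_enorm_toReal hp0 hp_top,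
    eLpNorm_eq_lintegral_rpow_enorm_toReal hp0 hp_top]
  gcongr ?_ ^ _
  calc ∫⁻ x, ‖∫ t, k x t * f t ∂ν‖ₑ ^ p.toReal ∂μ
      ≤ ∫⁻ x, (∫⁻ t, ‖k x t‖ₑ * ‖f t‖ₑ ∂ν) ^ p.toReal ∂μ := lintegral_mono fun x => by
        gcongr; exact enorm_integral_mul_le_lintegral_enorm_mul _ f
    _ ≤ ∫⁻ t, ‖f t‖ₑ ^ p.toReal ∂ν :=
        lintegral_rpow_lintegral_mul_le (K := fun x t => ‖k x t‖ₑ) hk.enorm hf.enorm hrow hcol hr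

theorem memLp_integral_mul [SFinite μ] [SFinite ν] {k : α → β → ℝ}
    (hk : Measurable (Function.uncurry k)) (hrow : ∀ x, ∫⁻ t, ‖k x t‖ₑ ∂ν ≤ 1)
    (hcol : ∀ t, ∫⁻ x, ‖k x t‖ₑ ∂μ ≤ 1) {p : ℝ≥0∞} (hp : 1 ≤ p) {f : β → ℝ}
    (hf : MemLp f p ν) : MemLp (fun x => ∫ t, k x t * f t ∂ν) p μ :=
  ⟨(hk.aestronglyMeasurable.mul hf.1.comp_snd).integral_prod_right',
    (eLpNorm_integral_mul_le hk hrow hcol hp hf.1).trans_lt hf.2⟩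

end SchurTest

theorem setLIntegral_Ioi_ofReal_le {φ : ℝ → ℝ} {x C : ℝ}
    (hφ : ∀ b, IntervalIntegrable φ volume x b) (hφ0 : ∀ t, 0 ≤ φ t)
    (h : ∀ b, x ≤ b → ∫ t in x..b, φ t ≤ C) :
    ∫⁻ t in Ioi x, ENNReal.ofReal (φ t) ≤ ENNReal.ofReal C := by
  have hcover : Ioi x = ⋃ n : ℕ, Ioc x (x + n) := by
    ext t
    simp only [mem_Ioi, mem_iUnion, mem_Ioc]
    exact ⟨fun ht => (exists_nat_ge (t - x)).imp fun n hn => ⟨ht, by linarith⟩,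
      fun ⟨_, ht, _⟩ => ht⟩
  have hmono : Monotone fun n : ℕ => Ioc x (x + n) := fun m n hmn =>
    Ioc_subset_Ioc_right (by gcongr)
  rw [hcover, setLIntegral_iUnion_of_directed _ hmono.directed_le]
  refine iSup_le fun n => ?_
  rw [← ofReal_integral_eq_lintegral_ofReal (hφ _).1 (ae_of_all _ hφ0),
    ← intervalIntegral.integral_of_le (by simp)]
  exact ENNReal.ofReal_le_ofReal (h _ (by simp))

theorem setLIntegral_Iic_ofReal_le {φ : ℝ → ℝ} {x C : ℝ}
    (hφ : ∀ a, IntervalIntegrable φ volume a x) (hφ0 : ∀ t, 0 ≤ φ t)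
    (h : ∀ a, a ≤ x → ∫ t in a..x, φ t ≤ C) :
    ∫⁻ t in Iic x, ENNReal.ofReal (φ t) ≤ ENNReal.ofReal C := by
  have hcover : Iic x = ⋃ n : ℕ, Ioc (x - n) x := by
    ext t
    simp only [mem_Iic, mem_iUnion, mem_Ioc]
    exact ⟨fun ht => (exists_nat_gt (x - t)).imp fun n hn => ⟨by linarith, ht⟩,
      fun ⟨_, _, ht⟩ => ht⟩
  have hmono : Monotone fun n : ℕ => Ioc (x - n) x := fun m n hmn =>
    Ioc_subset_Ioc_left (by gcongr)
  rw [hcover, setLIntegral_iUnion_of_directed _ hmono.directed_le]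
  refine iSup_le fun n => ?_
  rw [← ofReal_integral_eq_lintegral_ofReal (hφ _).1 (ae_of_all _ hφ0),
    ← intervalIntegral.integral_of_le (by simp)]
  exact ENNReal.ofReal_le_ofReal (h _ (by simp))

theorem intervalIntegral_le_intervalIntegral_mul {q φ : ℝ → ℝ} (hq_loc : LocallyIntegrable q)
    (hq : ∀ x, 1 ≤ q x) (hφ : Continuous φ) (hφ0 : ∀ t, 0 ≤ φ t) {a b : ℝ} (hab : a ≤ b) :
    ∫ t in a..b, φ t ≤ ∫ t in a..b, q t * φ t := by
  have hq_int : IntervalIntegrable q volume a b :=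
    (hq_loc.integrableOn_isCompact isCompact_uIcc).intervalIntegrable
  refine intervalIntegral.integral_mono_on hab (hφ.intervalIntegrable a b)
    (hq_int.mul_continuousOn hφ.continuousOn) fun t _ => ?_
  nlinarith [hq t, hφ0 t]

theorem greenFn_eq_max_min (u v : ℝ → ℝ) (x t : ℝ) :
    GreenFn u v x t = u (max x t) * v (min x t) := by
  unfold GreenFn
  split_ifs with h
  · rw [max_eq_right h, min_eq_left h]
  · rw [max_eq_left (le_of_not_ge h), min_eq_right (le_of_not_ge h)]

theorem greenFn_comm (u v : ℝ → ℝ) (x t : ℝ) : GreenFn u v x t = GreenFn u v t x := by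
  rw [greenFn_eq_max_min, greenFn_eq_max_min, max_comm, min_comm]

theorem greenFn_of_le {u v : ℝ → ℝ} {x t : ℝ} (h : t ≤ x) : GreenFn u v x t = u x * v t := by
  rw [greenFn_eq_max_min, max_eq_left h, min_eq_right h]

theorem continuous_greenFn {u v : ℝ → ℝ} (hu : Continuous u) (hv : Continuous v) :
    Continuous (Function.uncurry (GreenFn u v)) := by
  simp only [Function.uncurry_def, greenFn_eq_max_min]
  fun_prop

namespace IsPFSS

variable {q u v : ℝ → ℝ}

theorem setLIntegral_Ioi_le (hq_loc : LocallyIntegrable q) (hq : ∀ x, 1 ≤ q x)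
    (huv : IsPFSS q u v) (x : ℝ) :
    ∫⁻ t in Ioi x, ENNReal.ofReal (u t) ≤ ENNReal.ofReal (-deriv u x) := by
  obtain ⟨hu, -, hu'', -, hu0, -, hu', -⟩ := huv
  refine setLIntegral_Ioi_ofReal_le (fun b => hu.continuous.intervalIntegrable x b)
    (fun t => (hu0 t).le) fun b hxb => ?_
  calc ∫ t in x..b, u t ≤ ∫ t in x..b, q t * u t :=
        intervalIntegral_le_intervalIntegral_mul hq_loc hq hu.continuous (fun t => (hu0 t).le) hxb
    _ = deriv u b - deriv u x := (hu'' x b).symm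
    _ ≤ -deriv u x := by linarith [hu' b]

theorem setLIntegral_Iic_le (hq_loc : LocallyIntegrable q) (hq : ∀ x, 1 ≤ q x)
    (huv : IsPFSS q u v) (x : ℝ) :
    ∫⁻ t in Iic x, ENNReal.ofReal (v t) ≤ ENNReal.ofReal (deriv v x) := by
  obtain ⟨-, hv, -, hv'', -, hv0, -, hv', -⟩ := huv
  refine setLIntegral_Iic_ofReal_le (fun a => hv.continuous.intervalIntegrable a x)
    (fun t => (hv0 t).le) fun a hax => ?_
  calc ∫ t in a..x, v t ≤ ∫ t in a..x, q t * v t :=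
        intervalIntegral_le_intervalIntegral_mul hq_loc hq hv.continuous (fun t => (hv0 t).le) hax
    _ = deriv v x - deriv v a := (hv'' a x).symm
    _ ≤ deriv v x := by linarith [hv' a]

theorem lintegral_enorm_greenFn_le_one (hq_loc : LocallyIntegrable q) (hq : ∀ x, 1 ≤ q x)
    (huv : IsPFSS q u v) (x : ℝ) : ∫⁻ t, ‖GreenFn u v x t‖ₑ ≤ 1 := by
  have hv_int := setLIntegral_Iic_le hq_loc hq huv x
  have hu_int := setLIntegral_Ioi_le hq_loc hq huv x
  obtain ⟨-, -, -, -, hu0, hv0, hu', hv', hW, -⟩ := huv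
  have hG : ∀ t, ‖GreenFn u v x t‖ₑ = ENNReal.ofReal (GreenFn u v x t) := fun t =>
    Real.enorm_eq_ofReal (by rw [greenFn_eq_max_min]; exact mul_nonneg (hu0 _).le (hv0 _).le)
  calc ∫⁻ t, ‖GreenFn u v x t‖ₑ
      = (∫⁻ t in Iic x, ENNReal.ofReal (u x) * ENNReal.ofReal (v t))
        + ∫⁻ t in Ioi x, ENNReal.ofReal (v x) * ENNReal.ofReal (u t) := by
        rw [← lintegral_add_compl _ measurableSet_Iic, compl_Iic]
        congr 1
        · refine setLIntegral_congr_fun measurableSet_Iic fun t ht => ?_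
          rw [hG, greenFn_of_le ht, ENNReal.ofReal_mul (hu0 x).le]
        · refine setLIntegral_congr_fun measurableSet_Ioi fun t ht => ?_
          rw [hG, GreenFn, if_pos (le_of_lt ht), mul_comm, ENNReal.ofReal_mul (hv0 x).le]
    _ = ENNReal.ofReal (u x) * (∫⁻ t in Iic x, ENNReal.ofReal (v t))
        + ENNReal.ofReal (v x) * ∫⁻ t in Ioi x, ENNReal.ofReal (u t) := by
        rw [lintegral_const_mul' _ _ ENNReal.ofReal_ne_top,
          lintegral_const_mul' _ _ ENNReal.ofReal_ne_top]
    _ ≤ ENNReal.ofReal (u x) * ENNReal.ofReal (deriv v x)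
        + ENNReal.ofReal (v x) * ENNReal.ofReal (-deriv u x) := by
        gcongr
    _ = ENNReal.ofReal (deriv v x * u x - deriv u x * v x) := by
        rw [← ENNReal.ofReal_mul (hu0 x).le, ← ENNReal.ofReal_mul (hv0 x).le,
          ← ENNReal.ofReal_add (by nlinarith [hu0 x, hv' x]) (by nlinarith [hv0 x, hu' x])]
        ring_nf
    _ = 1 := by rw [hW x, ENNReal.ofReal_one]

end IsPFSS

/-- Theorem 1.2 (boundedness): there is an absolute constant `c > 0` such that for every
`p ∈ [1, ∞]` and every `f ∈ L_p(ℝ)`, `Gf ∈ L_p(ℝ)` and `‖Gf‖_p ≤ c ‖f‖_p`. -/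
theorem theorem_1_2_boundedness (q u v : ℝ → ℝ) (hq_loc : LocallyIntegrable q)
    (hq : ∀ x, 1 ≤ q x) (huv : IsPFSS q u v) :
    ∃ c : ℝ, 0 < c ∧ ∀ p : ℝ≥0∞, 1 ≤ p → ∀ f : ℝ → ℝ, MemLp f p →
      MemLp (GreenOp u v f) p ∧
      eLpNorm (GreenOp u v f) p volume ≤ ENNReal.ofReal c * eLpNorm f p volume := by
  have hG : Measurable (Function.uncurry (GreenFn u v)) :=
    (continuous_greenFn huv.1.continuous huv.2.1.continuous).measurable
  have hrow := huv.lintegral_enorm_greenFn_le_one hq_loc hq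
  have hcol : ∀ t, ∫⁻ x, ‖GreenFn u v x t‖ₑ ≤ 1 := fun t => by
    simpa only [greenFn_comm u v _ t] using hrow t
  refine ⟨1, one_pos, fun p hp f hf => ⟨memLp_integral_mul hG hrow hcol hp hf, ?_⟩⟩
  rw [ENNReal.ofReal_one, one_mul]
  exact eLpNorm_integral_mul_le hG hrow hcol hp hf.1
end
end

section
/- (Lemma 3.2) For all x, t ∈ ℝ: 0 < G(x,t) ≤ e^{−|t−x|} and 0 < G(x,t) ≤ (3/2)·d(x)·e^{−|t−x|}; moreover |u'(x)|·v(t) ≤ e^{−|t−x|} whenever x > t, and v'(x)·u(t) ≤ e^{−|t−x|} whenever x < t (i.e. |∂G(x,t)/∂x| ≤ e^{−|t−x|} for x ≠ t). -/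
/-!
Since `q ≥ 1`, the function `h = v - v'` satisfies `h' ≤ -h` and tends to `0` at `-∞`, which
forces `v ≤ v'`; symmetrically `u ≤ -u'`. Hence `v(x) e^{-x}` increases and `u(x) e^{x}` decreases,
so `G(x,t) ≤ u(x) v(x) e^{-|t-x|}`, and the Wronskian gives `2 u v ≤ v' u - u' v = 1` as well as
`-u' v ≤ 1` and `v' u ≤ 1`, which yield the derivative bounds.

For the bound by `d = d(x)`, put `A = ∫_x^{x+d} q` and `B = ∫_{x-d}^x q`, so `d (A + B) = 2`.
Convexity of `u` and the equation on `[x, x+d]` give `u A ≤ -u' (1 + d A)`, and likewise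
`v B ≤ v' (1 + d B)` on `[x-d, x]`. Eliminating `u'`, `v'` through the Wronskian,
`u v (A + B + 2 d A B) ≤ (1 + d A)(1 + d B)`, i.e. `u v (2 + 2 a b) ≤ d (3 + a b)` with
`a = d A`, `b = d B`, whence `u v ≤ 3 d / 2`.
-/

open MeasureTheory Filter Real Set
open scoped ENNReal

noncomputable section

open scoped Topology

theorem nonpos_of_add_integral_le {h : ℝ → ℝ} (hcont : Continuous h)
    (hdecay : ∀ a b, a ≤ b → h b + ∫ t in a..b, h t ≤ h a)
    (hlim : Tendsto h atBot (𝓝 0)) (x : ℝ) : h x ≤ 0 := by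
  -- Let `c` be the last point `≤ x` with `h c ≤ h x / 2`; `h ≥ 0` on `(c, x]`, so `hdecay`
  -- (an integrated form of `h' ≤ -h`) gives `h x ≤ h c`.
  by_contra! hx
  set S := {s | s ≤ x ∧ h s ≤ h x / 2}
  have hSbdd : BddAbove S := ⟨x, fun s hs => hs.1⟩
  have hS : S.Nonempty := by
    obtain ⟨s, hs, hsx⟩ :=
      ((hlim.eventually_le_const (half_pos hx)).and (eventually_le_atBot x)).exists
    exact ⟨s, hsx, hs⟩
  obtain ⟨hcx, hc⟩ : sSup S ∈ S :=
    (isClosed_Iic.inter (isClosed_le hcont continuous_const)).csSup_mem hS hSbdd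
  have hpos : ∀ t ∈ Ioc (sSup S) x, 0 ≤ h t := fun t ht => by
    have htS : t ∉ S := fun htS => (le_csSup hSbdd htS).not_gt ht.1
    simp only [S, mem_ofPred_eq, not_and, not_le] at htS
    linarith [htS ht.2]
  have hint : 0 ≤ ∫ t in (sSup S)..x, h t := by
    rw [intervalIntegral.integral_of_le hcx]
    exact setIntegral_nonneg measurableSet_Ioc hpos
  linarith [hdecay _ x hcx]

theorem le_deriv_of_le_deriv2 {w : ℝ → ℝ} (hw : ContDiff ℝ 1 w)
    (hw'' : ∀ a b, a ≤ b → ∫ t in a..b, w t ≤ deriv w b - deriv w a)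
    (hlim : Tendsto (fun s => w s - deriv w s) atBot (𝓝 0)) (x : ℝ) : w x ≤ deriv w x := by
  have hw' : Continuous (deriv w) := hw.continuous_deriv le_rfl
  have hftc (a b : ℝ) : ∫ t in a..b, deriv w t = w b - w a :=
    intervalIntegral.integral_deriv_eq_sub (fun t _ => hw.differentiable one_ne_zero t)
      (hw'.intervalIntegrable a b)
  suffices w x - deriv w x ≤ 0 by linarith
  refine nonpos_of_add_integral_le (h := fun s => w s - deriv w s) (hw.continuous.sub hw')
    (fun a b hab => ?_) hlim x
  rw [intervalIntegral.integral_sub (hw.continuous.intervalIntegrable a b)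
    (hw'.intervalIntegrable a b), hftc]
  linarith [hw'' a b hab]

theorem le_neg_deriv_of_le_deriv2 {w : ℝ → ℝ} (hw : ContDiff ℝ 1 w)
    (hw'' : ∀ a b, a ≤ b → ∫ t in a..b, w t ≤ deriv w b - deriv w a)
    (hlim : Tendsto (fun s => w s + deriv w s) atTop (𝓝 0)) (x : ℝ) : w x ≤ -deriv w x := by
  have key := le_deriv_of_le_deriv2 (w := fun s => w (-s)) (hw.comp contDiff_neg)
    (fun a b hab => ?_) ?_ (-x)
  · simpa [deriv_comp_neg] using key
  · simp only [deriv_comp_neg, intervalIntegral.integral_comp_neg fun t => w t]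
    linarith [hw'' (-b) (-a) (by linarith)]
  · simpa [deriv_comp_neg, Function.comp_def] using hlim.comp tendsto_neg_atBot_atTop

theorem le_mul_exp_sub_of_le_deriv {w : ℝ → ℝ} (hw : Differentiable ℝ w)
    (hw' : ∀ s, w s ≤ deriv w s) {t x : ℝ} (htx : t ≤ x) : w t ≤ w x * exp (t - x) := by
  have hmono : Monotone fun s => w s * exp (-s) := by
    refine monotone_of_deriv_nonneg (hw.mul (differentiable_exp.comp differentiable_neg)) ?_
    intro s
    have hd : HasDerivAt (fun s => w s * exp (-s)) _ s :=
      (hw s).hasDerivAt.mul (hasDerivAt_neg s).exp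
    rw [hd.deriv]
    nlinarith [hw' s, exp_pos (-s)]
  have := mul_le_mul_of_nonneg_right (hmono htx) (exp_pos t).le
  rwa [mul_assoc, ← exp_add, neg_add_cancel, exp_zero, mul_one, mul_assoc, ← exp_add,
    neg_add_eq_sub] at this

theorem mul_exp_sub_le_of_deriv_le_neg {w : ℝ → ℝ} (hw : Differentiable ℝ w)
    (hw' : ∀ s, deriv w s ≤ -w s) {t x : ℝ} (htx : t ≤ x) : w x ≤ w t * exp (t - x) := by
  have := le_mul_exp_sub_of_le_deriv (w := fun s => w (-s)) (hw.comp differentiable_neg)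
    (fun s => by rw [deriv_comp_neg]; linarith [hw' (-s)]) (neg_le_neg htx)
  simpa [neg_add_eq_sub] using this

theorem add_mul_deriv_le_of_monotone_deriv {f : ℝ → ℝ} (hf : Differentiable ℝ f)
    (hf' : Monotone (deriv f)) (a b : ℝ) : f a + (b - a) * deriv f a ≤ f b := by
  have hconv := hf'.convexOn_univ_of_deriv hf
  rcases lt_trichotomy a b with hab | rfl | hba
  · have := hconv.deriv_le_slope (mem_univ a) (mem_univ b) hab (hf a)
    rw [slope_def_field, le_div_iff₀ (sub_pos.2 hab)] at this
    linarith
  · simp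
  · have := hconv.slope_le_deriv (mem_univ b) (mem_univ a) hba (hf a)
    rw [slope_def_field, div_le_iff₀ (sub_pos.2 hba)] at this
    linarith

theorem mul_le_three_halves_mul {U V P Q A B D : ℝ} (hU : 0 ≤ U) (hV : 0 ≤ V) (hA : 0 ≤ A)
    (hB : 0 ≤ B) (hD : 0 < D) (hW : Q * U + P * V = 1) (hABD : D * (A + B) = 2)
    (hUA : U * A ≤ P * (1 + D * A)) (hVB : V * B ≤ Q * (1 + D * B)) : U * V ≤ 3 / 2 * D := by
  have key : U * V * (A + B + 2 * D * A * B) ≤ (1 + D * A) * (1 + D * B) := by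
    have hUA' := mul_le_mul_of_nonneg_right hUA (by positivity : 0 ≤ V * (1 + D * B))
    have hVB' := mul_le_mul_of_nonneg_right hVB (by positivity : 0 ≤ U * (1 + D * A))
    linear_combination hUA' + hVB' + (1 + D * A) * (1 + D * B) * hW
  have hab : 0 ≤ D * A * (D * B) := by positivity
  nlinarith [mul_le_mul_of_nonneg_left key hD.le, mul_nonneg hU hV]

theorem mul_integral_le_integral_mul_of_monotoneOn {q f : ℝ → ℝ} {a b : ℝ} (hab : a ≤ b)
    (hq : ∀ t, 0 ≤ q t) (hqi : IntervalIntegrable q volume a b)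
    (hqf : IntervalIntegrable (fun t => q t * f t) volume a b) (hf : MonotoneOn f (Icc a b)) :
    f a * ∫ t in a..b, q t ≤ ∫ t in a..b, q t * f t := by
  rw [← intervalIntegral.integral_const_mul]
  refine intervalIntegral.integral_mono_on hab (hqi.const_mul _) hqf fun t ht => ?_
  rw [mul_comm]
  exact mul_le_mul_of_nonneg_left (hf ⟨le_rfl, hab⟩ ht ht.1) (hq t)

theorem mul_integral_le_integral_mul_of_antitoneOn {q f : ℝ → ℝ} {a b : ℝ} (hab : a ≤ b)
    (hq : ∀ t, 0 ≤ q t) (hqi : IntervalIntegrable q volume a b)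
    (hqf : IntervalIntegrable (fun t => q t * f t) volume a b) (hf : AntitoneOn f (Icc a b)) :
    f b * ∫ t in a..b, q t ≤ ∫ t in a..b, q t * f t := by
  rw [← intervalIntegral.integral_const_mul]
  refine intervalIntegral.integral_mono_on hab (hqi.const_mul _) hqf fun t ht => ?_
  rw [mul_comm]
  exact mul_le_mul_of_nonneg_left (hf ht ⟨hab, le_rfl⟩ ht.2) (hq t)

theorem MeasureTheory.LocallyIntegrable.intervalIntegrable {q : ℝ → ℝ} (hq : LocallyIntegrable q)
    (a b : ℝ) : IntervalIntegrable q volume a b :=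
  (hq.integrableOn_isCompact isCompact_uIcc).intervalIntegrable

theorem monotone_deriv_of_integral_eq {q f : ℝ → ℝ} (hq : ∀ x, 0 ≤ q x) (hf : ∀ x, 0 ≤ f x)
    (hf'' : ∀ a b, deriv f b - deriv f a = ∫ t in a..b, q t * f t) : Monotone (deriv f) :=
  fun a b hab => by
    have : 0 ≤ ∫ t in a..b, q t * f t := intervalIntegral.integral_nonneg hab fun t _ =>
      mul_nonneg (hq t) (hf t)
    linarith [hf'' a b]

theorem integral_le_deriv_sub_of_integral_eq {q f : ℝ → ℝ} (hq_loc : LocallyIntegrable q)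
    (hq : ∀ x, 1 ≤ q x) (hf : Continuous f) (hf0 : ∀ x, 0 < f x)
    (hf'' : ∀ a b, deriv f b - deriv f a = ∫ t in a..b, q t * f t) (a b : ℝ) (hab : a ≤ b) :
    ∫ t in a..b, f t ≤ deriv f b - deriv f a := by
  rw [hf'']
  refine intervalIntegral.integral_mono_on hab (hf.intervalIntegrable a b)
    ((hq_loc.intervalIntegrable a b).mul_continuousOn hf.continuousOn) fun t _ => ?_
  nlinarith [hq t, hf0 t]

namespace IsPFSS

variable {q u v : ℝ → ℝ}

theorem contDiff_u (h : IsPFSS q u v) : ContDiff ℝ 1 u := h.1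

theorem contDiff_v (h : IsPFSS q u v) : ContDiff ℝ 1 v := h.2.1

theorem deriv_u_sub (h : IsPFSS q u v) (a b : ℝ) :
    deriv u b - deriv u a = ∫ t in a..b, q t * u t := h.2.2.1 a b

theorem deriv_v_sub (h : IsPFSS q u v) (a b : ℝ) :
    deriv v b - deriv v a = ∫ t in a..b, q t * v t := h.2.2.2.1 a b

theorem u_pos (h : IsPFSS q u v) (x : ℝ) : 0 < u x := h.2.2.2.2.1 x

theorem v_pos (h : IsPFSS q u v) (x : ℝ) : 0 < v x := h.2.2.2.2.2.1 x

theorem deriv_u_neg (h : IsPFSS q u v) (x : ℝ) : deriv u x < 0 := h.2.2.2.2.2.2.1 x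

theorem deriv_v_pos (h : IsPFSS q u v) (x : ℝ) : 0 < deriv v x := h.2.2.2.2.2.2.2.1 x

theorem wronskian (h : IsPFSS q u v) (x : ℝ) : deriv v x * u x - deriv u x * v x = 1 :=
  h.2.2.2.2.2.2.2.2.1 x

theorem le_deriv_v (h : IsPFSS q u v) (hq_loc : LocallyIntegrable q) (hq : ∀ x, 1 ≤ q x)
    (x : ℝ) : v x ≤ deriv v x := by
  obtain ⟨-, hv, -, hv'', -, hv0, -, -, -, -, -, -, -, -, hvB, hv'B, -, -⟩ := h
  exact le_deriv_of_le_deriv2 hv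
    (integral_le_deriv_sub_of_integral_eq hq_loc hq hv.continuous hv0 hv'')
    (by simpa using hvB.sub hv'B) x

theorem le_neg_deriv_u (h : IsPFSS q u v) (hq_loc : LocallyIntegrable q) (hq : ∀ x, 1 ≤ q x)
    (x : ℝ) : u x ≤ -deriv u x := by
  obtain ⟨hu, -, hu'', -, hu0, -, -, -, -, -, huT, hu'T, -⟩ := h
  exact le_neg_deriv_of_le_deriv2 hu
    (integral_le_deriv_sub_of_integral_eq hq_loc hq hu.continuous hu0 hu'')
    (by simpa using huT.add hu'T) x

theorem v_le_mul_exp (h : IsPFSS q u v) (hq_loc : LocallyIntegrable q) (hq : ∀ x, 1 ≤ q x)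
    {t x : ℝ} (htx : t ≤ x) : v t ≤ v x * exp (-|t - x|) := by
  rw [abs_of_nonpos (sub_nonpos.2 htx), neg_neg]
  exact le_mul_exp_sub_of_le_deriv (h.contDiff_v.differentiable one_ne_zero)
    (h.le_deriv_v hq_loc hq) htx

theorem u_le_mul_exp (h : IsPFSS q u v) (hq_loc : LocallyIntegrable q) (hq : ∀ x, 1 ≤ q x)
    {x t : ℝ} (hxt : x ≤ t) : u t ≤ u x * exp (-|t - x|) := by
  rw [abs_of_nonneg (sub_nonneg.2 hxt), neg_sub]
  exact mul_exp_sub_le_of_deriv_le_neg (h.contDiff_u.differentiable one_ne_zero)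
    (fun s => by linarith [h.le_neg_deriv_u hq_loc hq s]) hxt

theorem mul_le_half (h : IsPFSS q u v) (hq_loc : LocallyIntegrable q) (hq : ∀ x, 1 ≤ q x)
    (x : ℝ) : u x * v x ≤ 1 / 2 := by
  nlinarith [h.wronskian x, h.le_deriv_v hq_loc hq x, h.le_neg_deriv_u hq_loc hq x,
    h.u_pos x, h.v_pos x]

theorem greenFn_pos (h : IsPFSS q u v) (x t : ℝ) : 0 < GreenFn u v x t := by
  unfold GreenFn
  split_ifs <;> exact mul_pos (h.u_pos _) (h.v_pos _)

theorem greenFn_le (h : IsPFSS q u v) (hq_loc : LocallyIntegrable q) (hq : ∀ x, 1 ≤ q x)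
    (x t : ℝ) : GreenFn u v x t ≤ u x * v x * exp (-|t - x|) := by
  unfold GreenFn
  split_ifs with hxt
  · calc u t * v x ≤ u x * exp (-|t - x|) * v x :=
          mul_le_mul_of_nonneg_right (h.u_le_mul_exp hq_loc hq hxt) (h.v_pos x).le
      _ = u x * v x * exp (-|t - x|) := by ring
  · calc u x * v t ≤ u x * (v x * exp (-|t - x|)) :=
          mul_le_mul_of_nonneg_left (h.v_le_mul_exp hq_loc hq (not_le.1 hxt).le) (h.u_pos x).le
      _ = u x * v x * exp (-|t - x|) := by ring

theorem abs_deriv_u_mul_v_le (h : IsPFSS q u v) (hq_loc : LocallyIntegrable q)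
    (hq : ∀ x, 1 ≤ q x) {t x : ℝ} (htx : t ≤ x) : |deriv u x| * v t ≤ exp (-|t - x|) := by
  have hW : -deriv u x * v x ≤ 1 := by
    nlinarith [h.wronskian x, mul_pos (h.deriv_v_pos x) (h.u_pos x)]
  rw [abs_of_neg (h.deriv_u_neg x)]
  calc -deriv u x * v t ≤ -deriv u x * (v x * exp (-|t - x|)) :=
        mul_le_mul_of_nonneg_left (h.v_le_mul_exp hq_loc hq htx) (neg_pos.2 (h.deriv_u_neg x)).le
    _ = -deriv u x * v x * exp (-|t - x|) := by ring
    _ ≤ exp (-|t - x|) := mul_le_of_le_one_left (exp_pos _).le hW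

theorem deriv_v_mul_u_le (h : IsPFSS q u v) (hq_loc : LocallyIntegrable q)
    (hq : ∀ x, 1 ≤ q x) {x t : ℝ} (hxt : x ≤ t) : deriv v x * u t ≤ exp (-|t - x|) := by
  have hW : deriv v x * u x ≤ 1 := by
    nlinarith [h.wronskian x, mul_pos (neg_pos.2 (h.deriv_u_neg x)) (h.v_pos x)]
  calc deriv v x * u t ≤ deriv v x * (u x * exp (-|t - x|)) :=
        mul_le_mul_of_nonneg_left (h.u_le_mul_exp hq_loc hq hxt) (h.deriv_v_pos x).le
    _ = deriv v x * u x * exp (-|t - x|) := by ring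
    _ ≤ exp (-|t - x|) := mul_le_of_le_one_left (exp_pos _).le hW

theorem u_mul_integral_le (h : IsPFSS q u v) (hq_loc : LocallyIntegrable q) (hq : ∀ x, 0 ≤ q x)
    {D : ℝ} (hD : 0 ≤ D) (x : ℝ) :
    u x * ∫ t in x..(x + D), q t ≤ -deriv u x * (1 + D * ∫ t in x..(x + D), q t) := by
  have hu := h.contDiff_u
  have hA : 0 ≤ ∫ t in x..(x + D), q t :=
    intervalIntegral.integral_nonneg (by linarith) fun t _ => hq t
  have htangent : u x + D * deriv u x ≤ u (x + D) := by
    have := add_mul_deriv_le_of_monotone_deriv (hu.differentiable one_ne_zero)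
      (monotone_deriv_of_integral_eq hq (fun s => (h.u_pos s).le) h.deriv_u_sub) x (x + D)
    rwa [add_sub_cancel_left] at this
  have hanti : Antitone u :=
    antitone_of_deriv_nonpos (hu.differentiable one_ne_zero) fun s => (h.deriv_u_neg s).le
  have hint := mul_integral_le_integral_mul_of_antitoneOn (by linarith : x ≤ x + D)
    hq (hq_loc.intervalIntegrable _ _)
    ((hq_loc.intervalIntegrable _ _).mul_continuousOn hu.continuous.continuousOn)
    (hanti.antitoneOn _)
  rw [← h.deriv_u_sub] at hint
  nlinarith [h.deriv_u_neg (x + D), mul_le_mul_of_nonneg_right htangent hA]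

theorem v_mul_integral_le (h : IsPFSS q u v) (hq_loc : LocallyIntegrable q) (hq : ∀ x, 0 ≤ q x)
    {D : ℝ} (hD : 0 ≤ D) (x : ℝ) :
    v x * ∫ t in (x - D)..x, q t ≤ deriv v x * (1 + D * ∫ t in (x - D)..x, q t) := by
  have hv := h.contDiff_v
  have hB : 0 ≤ ∫ t in (x - D)..x, q t :=
    intervalIntegral.integral_nonneg (by linarith) fun t _ => hq t
  have htangent : v x - D * deriv v x ≤ v (x - D) := by
    have := add_mul_deriv_le_of_monotone_deriv (hv.differentiable one_ne_zero)
      (monotone_deriv_of_integral_eq hq (fun s => (h.v_pos s).le) h.deriv_v_sub) x (x - D)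
    rwa [sub_sub_cancel_left, neg_mul, ← sub_eq_add_neg] at this
  have hmono : Monotone v :=
    monotone_of_deriv_nonneg (hv.differentiable one_ne_zero) fun s => (h.deriv_v_pos s).le
  have hint := mul_integral_le_integral_mul_of_monotoneOn (by linarith : x - D ≤ x)
    hq (hq_loc.intervalIntegrable _ _)
    ((hq_loc.intervalIntegrable _ _).mul_continuousOn hv.continuous.continuousOn)
    (hmono.monotoneOn _)
  rw [← h.deriv_v_sub] at hint
  nlinarith [h.deriv_v_pos (x - D), mul_le_mul_of_nonneg_right htangent hB]

theorem mul_le_three_halves_mul_of_integral_eq (h : IsPFSS q u v) (hq_loc : LocallyIntegrable q)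
    (hq : ∀ x, 0 ≤ q x) {x D : ℝ} (hD : 0 < D)
    (hd : 2 = D * ∫ t in (x - D)..(x + D), q t) : u x * v x ≤ 3 / 2 * D := by
  have hnonneg : ∀ a b, a ≤ b → 0 ≤ ∫ t in a..b, q t := fun a b hab =>
    intervalIntegral.integral_nonneg hab fun t _ => hq t
  rw [← intervalIntegral.integral_add_adjacent_intervals (hq_loc.intervalIntegrable _ x)
    (hq_loc.intervalIntegrable x _)] at hd
  exact mul_le_three_halves_mul (h.u_pos x).le (h.v_pos x).le (hnonneg _ _ (by linarith))
    (hnonneg _ _ (by linarith)) hD (by linarith [h.wronskian x]) (by linarith)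
    (h.u_mul_integral_le hq_loc hq hD.le x) (h.v_mul_integral_le hq_loc hq hD.le x)

end IsPFSS

/-- Lemma 3.2: `0 < G(x,t) ≤ e^{-|t-x|}`, `0 < G(x,t) ≤ (3/2) d(x) e^{-|t-x|}`, and
`|∂G(x,t)/∂x| ≤ e^{-|t-x|}` for `x ≠ t`. -/
theorem lemma_3_2 (q u v : ℝ → ℝ) (hq_loc : LocallyIntegrable q) (hq : ∀ x, 1 ≤ q x)
    (huv : IsPFSS q u v) (d : ℝ → ℝ)
    (hd : ∀ x, 0 < d x ∧ (2 : ℝ) = d x * ∫ t in (x - d x)..(x + d x), q t) :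
    (∀ x t : ℝ, 0 < GreenFn u v x t ∧ GreenFn u v x t ≤ Real.exp (-|t - x|)) ∧
    (∀ x t : ℝ, GreenFn u v x t ≤ (3 / 2) * d x * Real.exp (-|t - x|)) ∧
    (∀ x t : ℝ, t < x → |deriv u x| * v t ≤ Real.exp (-|t - x|)) ∧
    (∀ x t : ℝ, x < t → deriv v x * u t ≤ Real.exp (-|t - x|)) := by
  refine ⟨fun x t => ⟨huv.greenFn_pos x t, ?_⟩, fun x t => ?_,
    fun x t htx => huv.abs_deriv_u_mul_v_le hq_loc hq htx.le,
    fun x t hxt => huv.deriv_v_mul_u_le hq_loc hq hxt.le⟩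
  · refine (huv.greenFn_le hq_loc hq x t).trans (mul_le_of_le_one_left (exp_pos _).le ?_)
    linarith [huv.mul_le_half hq_loc hq x]
  · refine (huv.greenFn_le hq_loc hq x t).trans (mul_le_mul_of_nonneg_right ?_ (exp_pos _).le)
    exact huv.mul_le_three_halves_mul_of_integral_eq hq_loc (fun y => zero_le_one.trans (hq y))
      (hd x).1 (hd x).2
end
end
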